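/- Let E be a countable set and p a transition kernel on E which is finitely supported ({y : p(x,y) > 0} is finite for each x), irreducible (for all x,y there is n with p^{(n)}(x,y) > 0) and transient (its Green function G(x,y) = ∑_{n≥0} p^{(n)}(x,y) is finite for all x,y). Fix a base point x₀ ∈ E. Suppose (y_n) is a sequence in E that eventually leaves every finite subset of E, and suppose the Martin kernels K(·,y_n) = G(·,y_n)/G(x₀,y_n) converge pointwise to a function h : E → [0,∞). Then h is harmonic for p: for every x ∈ E, h(x) = ∑_{z∈E} p(x,z) h(z). -/
import Mathlib


open Filter Topology

noncomputable section

/-- Convolution powers of a real-valued transition kernel on a countable set `E`: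
`p⁽⁰⁾(x,y) = δ(x,y)` and `p⁽ⁿ⁺¹⁾(x,y) = ∑_z p(x,z) p⁽ⁿ⁾(z,y)`. -/
def rKernelPow {E : Type*} [DecidableEq E] (p : E → E → ℝ) : ℕ → E → E → ℝ
  | 0 => fun x y => if x = y then 1 else 0
  | n + 1 => fun x y => ∑' z : E, p x z * rKernelPow p n z y

lemma rKernelPow_nonneg {E : Type*} [DecidableEq E] (p : E → E → ℝ)
    (hnn : ∀ x y, 0 ≤ p x y) : ∀ n x y, 0 ≤ rKernelPow p n x y := by
  intro n
  induction n with
  | zero => intro x y; unfold rKernelPow; split <;> norm_num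
  | succ n ih =>
      intro x y
      exact tsum_nonneg fun z => mul_nonneg (hnn x z) (ih z y)

lemma green_step {E : Type*} [DecidableEq E] (p : E → E → ℝ)
    (hfs : ∀ x, {y : E | p x y ≠ 0}.Finite)
    (htrans : ∀ x y : E, Summable fun n : ℕ => rKernelPow p n x y) (x y : E) :
    (∑' m : ℕ, rKernelPow p m x y) =
      (if x = y then 1 else 0) +
        ∑ z ∈ (hfs x).toFinset, p x z * ∑' m : ℕ, rKernelPow p m z y := by
  rw [Summable.tsum_eq_zero_add (htrans x y)]
  congr 1
  have h1 : ∀ n : ℕ, rKernelPow p (n + 1) x y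
        = ∑ z ∈ (hfs x).toFinset, p x z * rKernelPow p n z y := by
    intro n
    show (∑' z : E, p x z * rKernelPow p n z y) = _
    refine tsum_eq_sum fun z hz => ?_
    have hz0 : p x z = 0 := by
      by_contra h0
      exact hz ((hfs x).mem_toFinset.mpr h0)
    rw [hz0, zero_mul]
  calc (∑' n : ℕ, rKernelPow p (n + 1) x y)
        = ∑' n : ℕ, ∑ z ∈ (hfs x).toFinset, p x z * rKernelPow p n z y :=
          tsum_congr h1
      _ = ∑ z ∈ (hfs x).toFinset, ∑' n : ℕ, p x z * rKernelPow p n z y :=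
          Summable.tsum_finsetSum fun z _ => (htrans z y).mul_left _
      _ = ∑ z ∈ (hfs x).toFinset, p x z * ∑' n : ℕ, rKernelPow p n z y := by
          simp_rw [tsum_mul_left]

/-- let `p` be a finitely supported, irreducible, transient transition kernel on
a countable set `E` with base point `x₀`. If `(y_n)` eventually leaves every finite subset of
`E` and the Martin kernels `K(·,y_n) = G(·,y_n)/G(x₀,y_n)` converge pointwise to
`h : E → [0,∞)`, then `h` is harmonic: `h(x) = ∑_z p(x,z) h(z)` for every `x`. -/
theorem stmt18 {E : Type*} [Countable E] [DecidableEq E] (p : E → E → ℝ)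
    (hnn : ∀ x y, 0 ≤ p x y) (hfs : ∀ x, {y : E | p x y ≠ 0}.Finite)
    (hirr : ∀ x y : E, ∃ n : ℕ, 0 < rKernelPow p n x y)
    (htrans : ∀ x y : E, Summable fun n : ℕ => rKernelPow p n x y)
    (x₀ : E) (ys : ℕ → E)
    (hleave : ∀ S : Set E, S.Finite → ∀ᶠ n in atTop, ys n ∉ S)
    (h : E → ℝ) (hh : ∀ x, 0 ≤ h x)
    (hconv : ∀ x : E,
      Tendsto (fun n => (∑' m : ℕ, rKernelPow p m x (ys n)) /
          (∑' m : ℕ, rKernelPow p m x₀ (ys n))) atTop (𝓝 (h x))) :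
    ∀ x : E, h x = ∑' z : E, p x z * h z := by
  intro x
  set S := (hfs x).toFinset with hS
  -- eventually `ys n ≠ x`
  have hev : ∀ᶠ n in atTop, ys n ≠ x := by
    filter_upwards [hleave {x} (Set.finite_singleton x)] with n hn
    simpa using hn
  -- eventual identity for the Martin kernel
  have key : ∀ᶠ n in atTop,
      (∑' m : ℕ, rKernelPow p m x (ys n)) / (∑' m : ℕ, rKernelPow p m x₀ (ys n))
        = ∑ z ∈ S, p x z *
            ((∑' m : ℕ, rKernelPow p m z (ys n)) / (∑' m : ℕ, rKernelPow p m x₀ (ys n))) := by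
    filter_upwards [hev] with n hn
    rw [green_step p hfs htrans x (ys n), if_neg (Ne.symm hn), zero_add, Finset.sum_div]
    exact Finset.sum_congr rfl fun z _ => mul_div_assoc _ _ _
  have t1 : Tendsto (fun n => ∑ z ∈ S, p x z *
      ((∑' m : ℕ, rKernelPow p m z (ys n)) / (∑' m : ℕ, rKernelPow p m x₀ (ys n))))
      atTop (𝓝 (∑ z ∈ S, p x z * h z)) :=
    tendsto_finset_sum _ fun z _ => (hconv z).const_mul (p x z)
  have t2 : Tendsto (fun n => (∑' m : ℕ, rKernelPow p m x (ys n)) /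
      (∑' m : ℕ, rKernelPow p m x₀ (ys n))) atTop (𝓝 (∑ z ∈ S, p x z * h z)) :=
    t1.congr' (key.mono fun n hn => hn.symm)
  have hx : h x = ∑ z ∈ S, p x z * h z := tendsto_nhds_unique (hconv x) t2
  rw [hx]
  refine (tsum_eq_sum fun z hz => ?_).symm
  have hz0 : p x z = 0 := by
    by_contra h0
    exact hz ((hfs x).mem_toFinset.mpr h0)
  rw [hz0, zero_mul]
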